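/- arXiv:2511.02935 — 2 statements merged into one kernel-verified Lean document; each statement's English description precedes it below -/
import Mathlib

section
/- Let M be a matroid with fundamental pattern X. Then the matroid minimum rank of X equals the height of the lattice of flats of M, which equals r(M), and M attains this minimum: mr(X) = r(M). -/
/-!
The rank strictly increases along a strict chain of flats, while the closures of the initial
segments of an enumerated basis form a chain of flats of length `r(M)`; so `r(M)` is the length of
a longest chain of flats. A flat `F` avoiding `e` extends to a hyperplane avoiding `e` (a maximal
flat containing `F` but not `e` is a hyperplane, by the exchange property), so every flat of `M`
is an intersection of hyperplanes and is therefore a flat of every `N ∈ R(X)`. The chain of flats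
of `M` of length `r(M)` is then a chain of flats of `N`, giving `r(N) ≥ r(M)`.
-/

open Set

variable {α β : Type*}

/-- The rank of a matroid: the (common) cardinality of its bases. -/
noncomputable def Matroid.mrk (M : Matroid α) : ℕ := sSup (Set.ncard '' {B | M.IsBase B})

/-- A hyperplane of a matroid: a maximal proper flat
(equivalently, a flat of rank `r(M) - 1`). -/
def Matroid.IsHyperplane (M : Matroid α) (H : Set α) : Prop :=
  M.IsFlat H ∧ H ≠ M.E ∧ ∀ F, M.IsFlat F → H ⊆ F → F = H ∨ F = M.E

/-- A circuit of a matroid: a minimal dependent set. -/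
def Matroid.IsCircuit' (M : Matroid α) (Ct : Set α) : Prop :=
  Ct ⊆ M.E ∧ ¬ M.Indep Ct ∧ ∀ D, D ⊂ Ct → M.Indep D

/-- A point of a matroid: a rank-one flat, i.e. the closure of a nonloop. -/
def Matroid.IsPoint (M : Matroid α) (P : Set α) : Prop :=
  M.IsFlat P ∧ ∃ e, e ∉ M.closure ∅ ∧ P = M.closure {e}

namespace Matroid

variable {M N : Matroid α} {B F G I : Set α} {e : α}

lemma mrk_eq_ncard_of_isBase (hB : M.IsBase B) : M.mrk = B.ncard := by
  have h : ncard '' {B' | M.IsBase B'} = {B.ncard} := by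
    ext n
    constructor
    · rintro ⟨B', hB', rfl⟩
      exact hB'.ncard_eq_ncard_of_isBase hB
    · rintro rfl
      exact ⟨B, hB, rfl⟩
  rw [mrk, h, csSup_singleton]

lemma cast_mrk_eq_eRank [M.RankFinite] : (M.mrk : ℕ∞) = M.eRank := by
  obtain ⟨B, hB⟩ := M.exists_isBase
  rw [mrk_eq_ncard_of_isBase hB, hB.finite.cast_ncard_eq, hB.encard_eq_eRank]

lemma IsFlat.eRk_add_one_le_of_ssubset (hF : M.IsFlat F) (hFG : F ⊂ G) (hG : G ⊆ M.E) :
    M.eRk F + 1 ≤ M.eRk G := by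
  obtain ⟨x, hxG, hxF⟩ := exists_of_ssubset hFG
  have hx : x ∈ M.E \ M.closure F := ⟨hG hxG, by rwa [hF.closure]⟩
  rw [← eRk_insert_eq_add_one hx]
  exact M.eRk_mono (insert_subset hxG hFG.subset)

lemma le_eRank_of_strictMono_isFlat {n : ℕ} {f : Fin (n + 1) → Set α} (hf : StrictMono f)
    (hfl : ∀ i, M.IsFlat (f i)) : (n : ℕ∞) ≤ M.eRank := by
  have hchain : ∀ i : Fin (n + 1), ((i : ℕ) : ℕ∞) ≤ M.eRk (f i) := by
    refine Fin.induction (by simp) fun i ih => ?_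
    calc ((i.succ : ℕ) : ℕ∞) = (i.castSucc : ℕ) + 1 := by simp
      _ ≤ M.eRk (f i.castSucc) + 1 := by gcongr
      _ ≤ M.eRk (f i.succ) :=
        (hfl _).eRk_add_one_le_of_ssubset (hf i.castSucc_lt_succ) (hfl _).subset_ground
  simpa using (hchain (Fin.last n)).trans (M.eRk_le_eRank _)

lemma le_mrk_of_strictMono_isFlat [M.RankFinite] {n : ℕ} {f : Fin (n + 1) → Set α}
    (hf : StrictMono f) (hfl : ∀ i, M.IsFlat (f i)) : n ≤ M.mrk := by
  exact_mod_cast cast_mrk_eq_eRank (M := M) ▸ le_eRank_of_strictMono_isFlat hf hfl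

lemma Indep.exists_strictMono_isFlat (hI : M.Indep I) (hfin : I.Finite) :
    ∃ f : Fin (I.ncard + 1) → Set α, StrictMono f ∧ ∀ i, M.IsFlat (f i) := by
  obtain ⟨n, e, rfl⟩ := hfin.fin_embedding
  rw [ncard_range_of_injective e.injective, Nat.card_eq_fintype_card, Fintype.card_fin]
  have hinit : StrictMono fun i : Fin (n + 1) => {k : Fin n | (k : ℕ) < i} := by
    intro i j hij
    have hsub : {k : Fin n | (k : ℕ) < i} ⊆ {k | (k : ℕ) < j} :=
      fun k (hk : (k : ℕ) < i) => show (k : ℕ) < j from hk.trans hij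
    exact (ssubset_iff_of_subset hsub).2 ⟨⟨i, by omega⟩, hij, lt_irrefl (i : ℕ)⟩
  refine ⟨fun i => M.closure (e '' {k | (k : ℕ) < i}), fun i j hij => ?_,
    fun _ => M.isFlat_closure _⟩
  exact (hI.subset (image_subset_range _ _)).closure_ssubset_closure
    (e.injective.image_strictMono (hinit hij))

lemma IsFlat.exists_isHyperplane_superset_notMem [M.Finite] (hF : M.IsFlat F)
    (he : e ∈ M.E \ F) : ∃ H, M.IsHyperplane H ∧ F ⊆ H ∧ e ∉ H := by
  have hfin : {H | M.IsFlat H ∧ e ∉ H}.Finite :=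
    M.ground_finite.finite_subsets.subset fun H hH => hH.1.subset_ground
  obtain ⟨H, hFH, ⟨hH, heH⟩, hmax⟩ := hfin.exists_le_maximal ⟨hF, he.2⟩
  refine ⟨H, ⟨hH, fun hHE => heH (hHE ▸ he.1), fun F' hF' hHF' => ?_⟩, hFH, heH⟩
  by_cases heF' : e ∈ F'
  · refine .inr (hF'.subset_ground.antisymm fun x hx => ?_)
    by_cases hxH : x ∈ H
    · exact hHF' hxH
    -- `H` is maximal among flats avoiding `e`, so the flat spanned by `H` and `x` contains `e`.
    have hex : e ∈ M.closure (insert x H) := by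
      by_contra hne
      exact hxH (hmax ⟨M.isFlat_closure _, hne⟩ (M.subset_closure_of_subset' (subset_insert _ _))
        (M.mem_closure_of_mem' (mem_insert _ _)))
    have hxe : x ∈ M.closure (insert e H) := M.mem_closure_insert (by rwa [hH.closure]) hex
    exact hF'.closure ▸ M.closure_mono (insert_subset heF' hHF') hxe
  · exact .inl ((hmax ⟨hF', heF'⟩ hHF').antisymm hHF')

lemma IsFlat.isFlat_of_forall_isHyperplane [M.Finite] (hF : M.IsFlat F) (hE : N.E = M.E)
    (hN : ∀ H, M.IsHyperplane H → N.IsFlat H) : N.IsFlat F := by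
  refine isFlat_iff_closure_eq.2 <|
    subset_antisymm (fun x hx => ?_) (N.subset_closure F (hE ▸ hF.subset_ground))
  by_contra hxF
  obtain ⟨H, hH, hFH, hxH⟩ :=
    hF.exists_isHyperplane_superset_notMem ⟨hE ▸ N.closure_subset_ground F hx, hxF⟩
  exact hxH ((hN H hH).closure ▸ N.closure_mono hFH hx)

end Matroid

/-- for the fundamental pattern `X` of a matroid `M` (so that
`R(X)` consists of the matroids on the ground set of `M` in which every
hyperplane of `M` is a flat), the matroid minimum rank of `X` equals the height
of the lattice of flats of `M`, which equals `r(M)`, and `M` attains it. -/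
theorem fundamental_pattern_min_rank [Fintype α] (M : Matroid α)
    (hME : M.E = Set.univ) :
    IsLeast (Matroid.mrk ''
        {N : Matroid α | N.E = Set.univ ∧ ∀ H, M.IsHyperplane H → N.IsFlat H})
      M.mrk ∧
    IsGreatest {n : ℕ | ∃ f : Fin (n + 1) → Set α, StrictMono f ∧ ∀ i, M.IsFlat (f i)}
      M.mrk := by
  obtain ⟨B, hB⟩ := M.exists_isBase
  obtain ⟨f, hf, hfl⟩ : ∃ f : Fin (M.mrk + 1) → Set α, StrictMono f ∧ ∀ i, M.IsFlat (f i) :=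
    Matroid.mrk_eq_ncard_of_isBase hB ▸ hB.indep.exists_strictMono_isFlat B.toFinite
  refine ⟨⟨⟨M, ⟨hME, fun H hH => hH.1⟩, rfl⟩, ?_⟩, ⟨f, hf, hfl⟩, ?_⟩
  · rintro _ ⟨N, ⟨hNE, hN⟩, rfl⟩
    exact Matroid.le_mrk_of_strictMono_isFlat hf
      fun i => (hfl i).isFlat_of_forall_isHyperplane (hNE.trans hME.symm) hN
  · rintro n ⟨g, hg, hgl⟩
    exact Matroid.le_mrk_of_strictMono_isFlat hg hgl
end

section
/- Let X be a zero-nonzero pattern with triangle number k (equivalently, the height of L(X) is k). If some matroid M of rank k in the class R(X^T) has an adjoint, then the matroid minimum rank of X equals k. -/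
open Set

variable {α β : Type*}

variable {R C : Type*}

/-- Zero set of a set of columns: rows that are zero in every column of `A`. -/
def ZCol (X : R → C → Bool) (A : Set C) : Set R := {r | ∀ a ∈ A, X r a = false}

/-- Zero set of a set of rows: columns that are zero in every row of `B`. -/
def ZRow (X : R → C → Bool) (B : Set R) : Set C := {c | ∀ b ∈ B, X b c = false}

/-- The intersection lattice of a pattern. -/
def LX (X : R → C → Bool) : Set (Set C) := {F | ∃ S : Set R, F = ZRow X S}

/-- The class of matroids associated with a pattern `X`: matroids on the column
set in which the zero set of every row of `X` is a flat. -/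
def RX (X : R → C → Bool) : Set (Matroid C) :=
  {M | M.E = Set.univ ∧ ∀ r : R, M.IsFlat (ZRow X {r})}

/-- The matroid minimum rank of a pattern. -/
noncomputable def mr (X : R → C → Bool) : ℕ := sInf (Matroid.mrk '' RX X)

/-- `M'` is an adjoint of `M`: a simple matroid of the same rank admitting an
injective inclusion-reversing map from the lattice of flats of `M` to that of
`M'` restricting to a bijection from hyperplanes of `M` onto points of `M'`. -/
def Matroid.IsAdjoint (M : Matroid α) (M' : Matroid β) : Prop :=
  (∀ e ∈ M'.E, M'.Indep {e}) ∧
  (∀ e ∈ M'.E, ∀ f ∈ M'.E, M'.closure {e} = M'.closure {f} → e = f) ∧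
  M'.mrk = M.mrk ∧
  ∃ φ : Set α → Set β,
    (∀ F, M.IsFlat F → M'.IsFlat (φ F)) ∧
    Set.InjOn φ {F | M.IsFlat F} ∧
    (∀ F₁ F₂, M.IsFlat F₁ → M.IsFlat F₂ → F₁ ⊆ F₂ → φ F₂ ⊆ φ F₁) ∧
    Set.BijOn φ {H | M.IsHyperplane H} {P | M'.IsPoint P}

/-!
Every set of `L(X)` is an intersection of zero sets of rows, hence a flat of every `N ∈ R(X)`;
so a strict chain of length `k` in `L(X)` forces `r(N) ≥ k`.

For the other inequality let `φ` be the adjoint map of `M ∈ R(Xᵀ)` into `M'`. Being injective and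
inclusion-reversing between flats of two rank-`k` matroids, `φ` satisfies `r(F) + r'(φ F) = k`,
and it cannot send a flat `F` into the image of a point outside `F`. Give column `c` the flat
`φ (Z c)` of `M'`, where `Z c` is the zero set of `c`, and let `N` be the matroid on the columns
induced by the submodular function `B ↦ r'(⋃_{c ∈ B} φ (Z c))`. Then `r(N) ≤ r(M') = k`, and the
zero set of row `r` is a flat of `N`: every column outside it carries an element of `M'` outside
the flat `φ (cl {r})`, which contains the flats of all columns inside it.
-/

namespace Matroid

section Rank

variable {M : Matroid α} {I X Y U V F G A B₁ B₂ : Set α} {e : α}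

/-- The rank of a set as a natural number; `0` for a set of infinite rank. -/
noncomputable def rk (M : Matroid α) (X : Set α) : ℕ := (M.eRk X).toNat

lemma rk_closure_eq (M : Matroid α) (X : Set α) : M.rk (M.closure X) = M.rk X := by
  rw [rk, eRk_closure_eq, rk]

lemma IsBase.ncard_eq_rk_ground {B : Set α} (hB : M.IsBase B) : B.ncard = M.rk M.E := by
  rw [rk, ← eRank_def, ← hB.encard_eq_eRank, ncard_def]

lemma IsBasis'.rk_eq_ncard (hI : M.IsBasis' I X) : M.rk X = I.ncard := by
  rw [rk, ← hI.encard_eq_eRk, ncard_def]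

lemma Indep.rk_eq_ncard (hI : M.Indep I) : M.rk I = I.ncard :=
  hI.isBasis_self.isBasis'.rk_eq_ncard

lemma mrk_eq_rk_ground (M : Matroid α) : M.mrk = M.rk M.E := by
  obtain ⟨B, hB⟩ := M.exists_isBase
  have himage : ncard '' {B | M.IsBase B} = {M.rk M.E} :=
    eq_singleton_iff_unique_mem.2
      ⟨⟨B, hB, hB.ncard_eq_rk_ground⟩, fun _ ⟨_, hB', h⟩ ↦ h ▸ hB'.ncard_eq_rk_ground⟩
  rw [mrk, himage, csSup_singleton]

lemma IsFlat.inter (hF : M.IsFlat F) (hG : M.IsFlat G) : M.IsFlat (F ∩ G) := by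
  rw [inter_eq_iInter]
  exact .iInter (Bool.forall_bool.2 ⟨hG, hF⟩)

lemma isFlat_of_rk_lt_rk_insert (hX : X ⊆ M.E)
    (h : ∀ e ∈ M.E \ X, M.rk X < M.rk (insert e X)) : M.IsFlat X := by
  refine isFlat_iff_closure_eq.2 (subset_antisymm (fun e he ↦ by_contra fun heX ↦ ?_)
    (M.subset_closure X))
  have := h e ⟨M.mem_ground_of_mem_closure he, heX⟩
  rw [← M.rk_closure_eq (insert e X), closure_insert_eq_of_mem_closure he, rk_closure_eq] at this
  exact this.false

lemma IsFlat.closure_subset_of_subset (hF : M.IsFlat F) (hXF : X ⊆ F) : M.closure X ⊆ F :=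
  hF.closure ▸ M.closure_subset_closure hXF

lemma rk_loops (M : Matroid α) : M.rk M.loops = 0 := by
  rw [rk, eRk_loops, ENat.toNat_zero]

variable [M.RankFinite]

lemma cast_rk_eq (M : Matroid α) [M.RankFinite] (X : Set α) : (M.rk X : ℕ∞) = M.eRk X :=
  ENat.natCast_toNat ((M.isRkFinite_set X).eRk_lt_top.ne)

lemma rk_mono (h : X ⊆ Y) : M.rk X ≤ M.rk Y := by
  have := M.eRk_mono h
  rwa [← cast_rk_eq, ← cast_rk_eq, Nat.cast_le] at this

lemma rk_insert_eq_add_one (he : e ∈ M.E \ M.closure X) : M.rk (insert e X) = M.rk X + 1 := by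
  have := eRk_insert_eq_add_one he
  rw [← cast_rk_eq, ← cast_rk_eq] at this
  exact_mod_cast this

lemma rk_inter_add_rk_union_le (M : Matroid α) [M.RankFinite] (X Y : Set α) :
    M.rk (X ∩ Y) + M.rk (X ∪ Y) ≤ M.rk X + M.rk Y := by
  have := M.eRk_inter_add_eRk_union_le X Y
  simp only [← cast_rk_eq] at this
  exact_mod_cast this

lemma rk_lt_rk_union_of_not_subset (hF : M.IsFlat F) (hUF : U ⊆ F) (hV : V ⊆ M.E)
    (hVF : ¬ V ⊆ F) : M.rk U < M.rk (U ∪ V) := by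
  obtain ⟨e, heV, heF⟩ := not_subset.1 hVF
  have he : e ∈ M.E \ M.closure U :=
    ⟨hV heV, fun h ↦ heF (hF.closure_subset_of_subset hUF h)⟩
  calc M.rk U < M.rk (insert e U) := by rw [rk_insert_eq_add_one he]; omega
    _ ≤ M.rk (U ∪ V) := rk_mono (insert_subset (Or.inr heV) subset_union_left)

lemma IsFlat.rk_closure_insert (hF : M.IsFlat F) (he : e ∈ M.E \ F) :
    M.rk (M.closure (insert e F)) = M.rk F + 1 := by
  rw [rk_closure_eq, rk_insert_eq_add_one (by rwa [hF.closure])]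

lemma IsFlat.rk_lt_of_ssubset (hF : M.IsFlat F) (hFG : F ⊂ G) (hG : G ⊆ M.E) :
    M.rk F < M.rk G := by
  simpa [union_eq_self_of_subset_left hFG.subset] using
    rk_lt_rk_union_of_not_subset hF subset_rfl hG hFG.not_subset

lemma IsFlat.eq_of_subset_of_rk_le (hF : M.IsFlat F) (hG : G ⊆ M.E) (hFG : F ⊆ G)
    (hr : M.rk G ≤ M.rk F) : F = G :=
  by_contra fun hne ↦ (hF.rk_lt_of_ssubset (hFG.ssubset_of_ne hne) hG).not_ge hr

lemma IsFlat.inter_eq_of_rk_eq_add_one (hA : M.IsFlat A) (hB₁ : M.IsFlat B₁)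
    (hB₂ : M.IsFlat B₂) (hAB₁ : A ⊆ B₁) (hAB₂ : A ⊆ B₂) (hr₁ : M.rk B₁ = M.rk A + 1)
    (hr₂ : M.rk B₂ = M.rk A + 1) (hne : B₁ ≠ B₂) : B₁ ∩ B₂ = A := by
  by_contra h
  have hlt := hA.rk_lt_of_ssubset ((subset_inter hAB₁ hAB₂).ssubset_of_ne (Ne.symm h))
    (inter_subset_left.trans hB₁.subset_ground)
  have h₁ := (hB₁.inter hB₂).eq_of_subset_of_rk_le hB₁.subset_ground inter_subset_left (by omega)
  have h₂ := (hB₁.inter hB₂).eq_of_subset_of_rk_le hB₂.subset_ground inter_subset_right (by omega)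
  exact hne (h₁.symm.trans h₂)

lemma IsFlat.exists_superset_rk_add_one_eq (hF : M.IsFlat F) (he : e ∈ M.E \ F) :
    ∃ H, M.IsFlat H ∧ M.rk H + 1 = M.rk M.E ∧ F ⊆ H ∧ e ∉ H := by
  obtain ⟨I, hI⟩ := M.exists_isBasis F
  have heI : e ∉ M.closure I := by rw [hI.closure_eq_closure, hF.closure]; exact he.2
  obtain ⟨B, hB, hIB⟩ := (hI.indep.insert_indep_iff.2 (.inl ⟨he.1, heI⟩)).exists_isBase_superset
  have heB : e ∈ B := hIB (mem_insert _ _)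
  refine ⟨M.closure (B \ {e}), isFlat_closure _, ?_, ?_, hB.indep.notMem_closure_sdiff_of_mem heB⟩
  · rw [rk_closure_eq, (hB.indep.subset sdiff_subset).rk_eq_ncard, ← hB.ncard_eq_rk_ground,
      ncard_sdiff_singleton_add_one heB hB.finite]
  · rw [← hF.closure, ← hI.closure_eq_closure]
    exact M.closure_subset_closure (subset_sdiff_singleton ((subset_insert _ _).trans hIB)
      fun h ↦ heI (M.mem_closure_of_mem' h))

lemma le_rk_ground_of_strictMono {n : ℕ} {f : Fin (n + 1) → Set α} (hf : StrictMono f)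
    (hflat : ∀ i, M.IsFlat (f i)) : n ≤ M.rk M.E := by
  have hrk : StrictMono (M.rk ∘ f) := fun i j hij ↦
    (hflat i).rk_lt_of_ssubset (hf hij) (hflat j).subset_ground
  calc n ≤ M.rk (f 0) + n := Nat.le_add_left _ _
    _ ≤ M.rk (f (Fin.last n)) := (LTSeries.mk n _ hrk).head_add_length_le_nat
    _ ≤ M.rk M.E := rk_mono (hflat _).subset_ground

end Rank

section AntiEmbedding

variable {M : Matroid α} {M' : Matroid β} {φ : Set α → Set β} {F G H D G' D' : Set α} {p : α}

structure IsFlatAntiEmbedding (M : Matroid α) (M' : Matroid β) (φ : Set α → Set β) : Prop where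
  isFlat_image : ∀ ⦃F⦄, M.IsFlat F → M'.IsFlat (φ F)
  injOn : InjOn φ {F | M.IsFlat F}
  antitone : ∀ ⦃F G⦄, M.IsFlat F → M.IsFlat G → F ⊆ G → φ G ⊆ φ F

variable [M.RankFinite] [M'.RankFinite]

lemma IsFlatAntiEmbedding.rk_add_rk_image_le (hφ : M.IsFlatAntiEmbedding M' φ)
    (hF : M.IsFlat F) (hG : M.IsFlat G) (hFG : F ⊆ G) :
    M.rk G + M'.rk (φ G) ≤ M.rk F + M'.rk (φ F) := by
  obtain ⟨n, hn⟩ : ∃ n, M.rk F + n = M.rk G := ⟨_, Nat.add_sub_cancel' (rk_mono hFG)⟩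
  induction n generalizing F with
  | zero => rw [hF.eq_of_subset_of_rk_le hG.subset_ground hFG (by omega)]
  | succ n ih =>
    obtain ⟨x, hxG, hxF⟩ := exists_of_ssubset (hFG.ssubset_of_ne (by rintro rfl; omega))
    have hx : x ∈ M.E \ F := ⟨hG.subset_ground hxG, hxF⟩
    have hF' : M.IsFlat (M.closure (insert x F)) := isFlat_closure _
    have hrF' := hF.rk_closure_insert hx
    have hFF' : F ⊆ M.closure (insert x F) :=
      M.subset_closure_of_subset (subset_insert x F) (insert_subset hx.1 hF.subset_ground)
    have hφF' : φ (M.closure (insert x F)) ⊂ φ F :=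
      (hφ.antitone hF hF' hFF').ssubset_of_ne fun h ↦ by
        rw [hφ.injOn hF' hF h] at hrF'
        omega
    have := (hφ.isFlat_image hF').rk_lt_of_ssubset hφF' (hφ.isFlat_image hF).subset_ground
    have := ih hF' (hG.closure_subset_of_subset (insert_subset hxG hFG)) (by omega)
    omega

lemma IsFlatAntiEmbedding.rk_add_rk_image_eq (hφ : M.IsFlatAntiEmbedding M' φ)
    (hr : M'.rk M'.E = M.rk M.E) (hF : M.IsFlat F) : M.rk F + M'.rk (φ F) = M.rk M.E := by
  have hlow := hφ.rk_add_rk_image_le hF M.ground_isFlat hF.subset_ground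
  have hup := hφ.rk_add_rk_image_le (F := M.loops) (isFlat_closure ∅) hF hF.loops_subset
  have hloops : M'.rk (φ M.loops) ≤ M'.rk M'.E :=
    rk_mono (hφ.isFlat_image (F := M.loops) (isFlat_closure ∅)).subset_ground
  have := M.rk_loops
  omega

/-- The distinct flats `G`, `D'` covered by `G'` have images covering `φ G'`, so
`φ G ∩ φ D' = φ G'`. -/
lemma IsFlatAntiEmbedding.image_subset_of_covBy (hφ : M.IsFlatAntiEmbedding M' φ)
    (hr : M'.rk M'.E = M.rk M.E) (hH : M.IsFlat H) (hG : M.IsFlat G) (hG' : M.IsFlat G')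
    (hD' : M.IsFlat D') (hGG' : G ⊆ G') (hD'G' : D' ⊆ G') (hD'H : D' ⊆ H) (hGH : ¬ G ⊆ H)
    (hrG' : M.rk G' = M.rk G + 1) (hrD' : M.rk D' = M.rk G) (hsub : φ H ⊆ φ G) :
    φ H ⊆ φ G' := by
  have := hφ.rk_add_rk_image_eq hr hG
  have := hφ.rk_add_rk_image_eq hr hG'
  have := hφ.rk_add_rk_image_eq hr hD'
  have hne : φ G ≠ φ D' := fun h ↦ hGH (hφ.injOn hG hD' h ▸ hD'H)
  rw [← (hφ.isFlat_image hG').inter_eq_of_rk_eq_add_one (hφ.isFlat_image hG)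
    (hφ.isFlat_image hD') (hφ.antitone hG hG' hGG') (hφ.antitone hD' hG' hD'G') (by omega)
    (by omega) hne]
  exact subset_inter hsub (hφ.antitone hD' hH hD'H)

/-- Adding a point of `H \ G` to both `G` and `D` preserves the hypotheses, so we may grow `G`
up to `M.E`, whose image has rank `0`, while `φ H` has rank `1`. -/
lemma IsFlatAntiEmbedding.not_image_subset_of_covBy (hφ : M.IsFlatAntiEmbedding M' φ)
    (hr : M'.rk M'.E = M.rk M.E) (hH : M.IsFlat H) (hrH : M.rk H + 1 = M.rk M.E)
    (hD : M.IsFlat D) (hG : M.IsFlat G) (hDH : D ⊆ H) (hDG : D ⊆ G)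
    (hrG : M.rk G = M.rk D + 1) (hGH : ¬ G ⊆ H) : ¬ φ H ⊆ φ G := by
  obtain ⟨n, hn⟩ : ∃ n, M.rk G + n = M.rk M.E :=
    ⟨_, Nat.add_sub_cancel' (rk_mono hG.subset_ground)⟩
  induction n generalizing G D with
  | zero =>
    intro hsub
    have hGE := hG.eq_of_subset_of_rk_le M.ground_isFlat.subset_ground hG.subset_ground (by omega)
    have := hφ.rk_add_rk_image_eq hr hH
    have := hφ.rk_add_rk_image_eq hr hG
    have := rk_mono (M := M') hsub
    omega
  | succ n ih =>
    intro hsub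
    have hHG : ¬ H ⊆ G := fun h ↦ by
      have := hH.rk_lt_of_ssubset (h.ssubset_of_ne (by rintro rfl; exact hGH subset_rfl))
        hG.subset_ground
      omega
    obtain ⟨a, haH, haG⟩ := not_subset.1 hHG
    have ha : a ∈ M.E \ G := ⟨hH.subset_ground haH, haG⟩
    have haD : a ∈ M.E \ D := ⟨ha.1, fun h ↦ haG (hDG h)⟩
    have hG' : M.IsFlat (M.closure (insert a G)) := isFlat_closure _
    have hD' : M.IsFlat (M.closure (insert a D)) := isFlat_closure _
    have hGG' : G ⊆ M.closure (insert a G) :=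
      M.subset_closure_of_subset (subset_insert a G) (insert_subset ha.1 hG.subset_ground)
    have hD'G' : M.closure (insert a D) ⊆ M.closure (insert a G) :=
      M.closure_subset_closure (insert_subset_insert hDG)
    have hD'H : M.closure (insert a D) ⊆ H := hH.closure_subset_of_subset (insert_subset haH hDH)
    have hrG' := hG.rk_closure_insert ha
    have hrD' := hD.rk_closure_insert haD
    exact ih hD' hG' hD'H hD'G' (by omega) (fun h ↦ hGH (hGG'.trans h)) (by omega)
      (hφ.image_subset_of_covBy hr hH hG hG' hD' hGG' hD'G' hD'H hGH hrG' (by omega) hsub)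

lemma IsFlatAntiEmbedding.not_image_subset_image_closure_singleton
    (hφ : M.IsFlatAntiEmbedding M' φ) (hr : M'.rk M'.E = M.rk M.E) (hF : M.IsFlat F)
    (hp : p ∈ M.E \ F) : ¬ φ F ⊆ φ (M.closure {p}) := by
  obtain ⟨H, hH, hrH, hFH, hpH⟩ := hF.exists_superset_rk_add_one_eq hp
  have hloops : M.IsFlat M.loops := isFlat_closure ∅
  have hrp : M.rk (M.closure {p}) = M.rk M.loops + 1 := by
    rw [rk_closure_eq, ← insert_empty_eq,
      rk_insert_eq_add_one ⟨hp.1, fun h ↦ hpH (hH.loops_subset h)⟩, ← M.rk_closure_eq ∅,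
      closure_empty]
  have hpH' : ¬ M.closure {p} ⊆ H :=
    fun h ↦ hpH (h (M.mem_closure_of_mem' (mem_singleton p) hp.1))
  exact fun hsub ↦ hφ.not_image_subset_of_covBy hr hH hrH hloops (isFlat_closure _)
    hH.loops_subset (M.closure_subset_closure (empty_subset _)) hrp hpH'
    ((hφ.antitone hF hH hFH).trans hsub)

end AntiEmbedding

end Matroid

section Polymatroid

variable {f : Set α → ℕ} {A A' B I J S : Set α} {x : α}

structure IsPolymatroidRank (f : Set α → ℕ) : Prop where
  map_empty : f ∅ = 0
  mono : Monotone f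
  submod : ∀ B B', f (B ∪ B') + f (B ∩ B') ≤ f B + f B'

/-- The rank function of the matroid induced by `f` (Edmonds–Rota). -/
noncomputable def inducedRank (f : Set α → ℕ) (A : Set α) : ℕ :=
  sInf ((fun B ↦ (A \ B).ncard + f B) '' Iic A)

lemma inducedRank_le (hB : B ⊆ A) : inducedRank f A ≤ (A \ B).ncard + f B :=
  Nat.sInf_le ⟨B, hB, rfl⟩

lemma exists_inducedRank_eq (f : Set α → ℕ) (A : Set α) :
    ∃ B ⊆ A, inducedRank f A = (A \ B).ncard + f B := by
  obtain ⟨B, hB, h⟩ := Nat.sInf_mem (⟨_, A, mem_Iic.2 subset_rfl, rfl⟩ :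
    ((fun B ↦ (A \ B).ncard + f B) '' Iic A).Nonempty)
  exact ⟨B, hB, h.symm⟩

lemma inducedRank_le_ncard (hf : f ∅ = 0) (A : Set α) : inducedRank f A ≤ A.ncard := by
  simpa [hf] using inducedRank_le (f := f) (empty_subset A)

variable [Finite α]

lemma inducedRank_union_le (f : Set α → ℕ) (A A' : Set α) :
    inducedRank f (A ∪ A') ≤ inducedRank f A + A'.ncard := by
  obtain ⟨B, hB, hEq⟩ := exists_inducedRank_eq f A
  have hcard : ((A ∪ A') \ B).ncard ≤ (A \ B).ncard + A'.ncard :=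
    (ncard_le_ncard (union_sdiff_distrib ▸ union_subset_union_right _ sdiff_subset)).trans
      (ncard_union_le _ _)
  have := inducedRank_le (f := f) (hB.trans (subset_union_left (t := A')))
  omega

lemma inducedRank_insert_le (f : Set α → ℕ) (A : Set α) (x : α) :
    inducedRank f (insert x A) ≤ inducedRank f A + 1 := by
  simpa using inducedRank_union_le f A {x}

lemma inducedRank_mono (hf : Monotone f) (hAA' : A ⊆ A') :
    inducedRank f A ≤ inducedRank f A' := by
  obtain ⟨B, hB, hEq⟩ := exists_inducedRank_eq f A'
  have := inducedRank_le (f := f) (inter_subset_right (s := B) (t := A))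
  have hdiff : A \ (B ∩ A) ⊆ A' \ B := fun y hy ↦ ⟨hAA' hy.1, fun hyB ↦ hy.2 ⟨hyB, hy.1⟩⟩
  have := ncard_le_ncard hdiff
  have := hf (inter_subset_left (s := B) (t := A))
  omega

lemma inducedRank_submod (hf : ∀ B B', f (B ∪ B') + f (B ∩ B') ≤ f B + f B') (A A' : Set α) :
    inducedRank f (A ∪ A') + inducedRank f (A ∩ A') ≤ inducedRank f A + inducedRank f A' := by
  obtain ⟨B, hB, hEq⟩ := exists_inducedRank_eq f A
  obtain ⟨B', hB', hEq'⟩ := exists_inducedRank_eq f A'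
  have := inducedRank_le (f := f) (union_subset_union hB hB')
  have := inducedRank_le (f := f) (inter_subset_inter hB hB')
  have := hf B B'
  have := ncard_sdiff_add_ncard_of_subset (union_subset_union hB hB') (toFinite (A ∪ A'))
  have := ncard_sdiff_add_ncard_of_subset (inter_subset_inter hB hB') (toFinite (A ∩ A'))
  have := ncard_sdiff_add_ncard_of_subset hB (toFinite A)
  have := ncard_sdiff_add_ncard_of_subset hB' (toFinite A')
  have := ncard_union_add_ncard_inter A A'
  have := ncard_union_add_ncard_inter B B'
  omega

lemma inducedRank_union_eq (hmono : Monotone f)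
    (hsub : ∀ B B', f (B ∪ B') + f (B ∩ B') ≤ f B + f B')
    (h : ∀ x ∈ S, inducedRank f (insert x A) = inducedRank f A) :
    inducedRank f (A ∪ S) = inducedRank f A := by
  induction S, toFinite S using Set.Finite.induction_on with
  | empty => rw [union_empty]
  | @insert y S _ _ ih =>
    have hS := ih fun x hx ↦ h x (mem_insert_of_mem _ hx)
    have hsub := inducedRank_submod hsub (A ∪ S) (insert y A)
    have hunion : (A ∪ S) ∪ insert y A = A ∪ insert y S := by
      ext
      simp only [mem_union, mem_insert_iff]
      tauto
    rw [hunion] at hsub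
    have := inducedRank_mono hmono (subset_inter (subset_union_left (t := S)) (subset_insert y A))
    have := inducedRank_mono hmono (subset_union_left (s := A) (t := insert y S))
    have := h y (mem_insert y S)
    omega

lemma inducedRank_lt_insert (hx : x ∉ A) (h : ∀ B ⊆ A, f B < f (insert x B)) :
    inducedRank f A < inducedRank f (insert x A) := by
  obtain ⟨B, hB, hEq⟩ := exists_inducedRank_eq f (insert x A)
  by_cases hxB : x ∈ B
  · have hB' : B \ {x} ⊆ A := fun y hy ↦ (hB hy.1).resolve_left hy.2
    have hdiff : insert x A \ B = A \ (B \ {x}) := by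
      ext y; by_cases hy : y = x <;> simp_all
    have := inducedRank_le (f := f) hB'
    have := h _ hB'
    rw [insert_sdiff_singleton, insert_eq_of_mem hxB] at this
    rw [hEq, hdiff]
    omega
  · have hB' : B ⊆ A := fun y hy ↦ (hB hy).resolve_left (ne_of_mem_of_not_mem hy hxB)
    have := inducedRank_le (f := f) hB'
    rw [hEq, insert_sdiff_of_notMem _ hxB, ncard_insert_of_notMem (fun h ↦ hx h.1)]
    omega

lemma inducedRank_insert_eq (hf : Monotone f)
    (hI : inducedRank f I = I.ncard) (hxI : x ∉ I)
    (hx : inducedRank f (insert x I) ≠ (insert x I).ncard) :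
    inducedRank f (insert x I) = inducedRank f I := by
  have := inducedRank_insert_le f I x
  have := inducedRank_mono hf (subset_insert x I)
  rw [ncard_insert_of_notMem hxI] at hx
  omega

lemma inducedRank_eq_ncard_of_subset (hf : f ∅ = 0)
    (hJ : inducedRank f J = J.ncard) (hIJ : I ⊆ J) : inducedRank f I = I.ncard := by
  have := inducedRank_union_le f I (J \ I)
  rw [union_sdiff_cancel hIJ] at this
  have := ncard_sdiff_add_ncard_of_subset hIJ
  have := inducedRank_le_ncard hf I
  omega

lemma exists_insert_inducedRank_eq_ncard (hmono : Monotone f)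
    (hsub : ∀ B B', f (B ∪ B') + f (B ∩ B') ≤ f B + f B') (hI : inducedRank f I = I.ncard)
    (hJ : inducedRank f J = J.ncard) (hIJ : I.ncard < J.ncard) :
    ∃ x ∈ J, x ∉ I ∧ inducedRank f (insert x I) = (insert x I).ncard := by
  by_contra! h
  have hunion := inducedRank_union_eq hmono hsub (A := I) (S := J \ I)
    fun x hx ↦ inducedRank_insert_eq hmono hI hx.2 (h x hx.1 hx.2)
  have := inducedRank_mono hmono (union_sdiff_self.symm ▸ subset_union_right : J ⊆ I ∪ J \ I)
  omega

noncomputable def IsPolymatroidRank.matroid (hf : IsPolymatroidRank f) : Matroid α :=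
  (IndepMatroid.ofFinite (toFinite univ) (fun I ↦ inducedRank f I = I.ncard)
    (by simpa using inducedRank_le_ncard hf.map_empty ∅)
    (fun _ _ hJ hIJ ↦ inducedRank_eq_ncard_of_subset hf.map_empty hJ hIJ)
    (fun _ _ hI hJ hIJ ↦ exists_insert_inducedRank_eq_ncard hf.mono hf.submod hI hJ hIJ)
    (fun I _ ↦ subset_univ I)).matroid

@[simp] lemma IsPolymatroidRank.matroid_E (hf : IsPolymatroidRank f) : hf.matroid.E = univ := rfl

lemma IsPolymatroidRank.matroid_rk (hf : IsPolymatroidRank f) (A : Set α) :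
    hf.matroid.rk A = inducedRank f A := by
  obtain ⟨I, hI⟩ := hf.matroid.exists_isBasis' A
  have hIind : inducedRank f I = I.ncard := hI.indep
  have hunion := inducedRank_union_eq hf.mono hf.submod (A := I) (S := A \ I)
    fun x hx ↦ inducedRank_insert_eq hf.mono hIind hx.2 (hI.insert_not_indep hx)
  rw [union_sdiff_cancel hI.subset] at hunion
  rw [hI.rk_eq_ncard, hunion, hIind]

end Polymatroid

lemma Matroid.isPolymatroidRank_rk_biUnion (M : Matroid β) [M.RankFinite] (Φ : α → Set β) :
    IsPolymatroidRank fun B ↦ M.rk (⋃ c ∈ B, Φ c) where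
  map_empty := by simp [M.empty_indep.rk_eq_ncard]
  mono _ _ h := M.rk_mono (biUnion_subset_biUnion_left h)
  submod B B' := by
    have := M.rk_mono (subset_inter (biUnion_subset_biUnion_left (t := Φ) inter_subset_left)
      (biUnion_subset_biUnion_left (t := Φ) (inter_subset_right (s := B) (t := B'))))
    have := M.rk_inter_add_rk_union_le (⋃ c ∈ B, Φ c) (⋃ c ∈ B', Φ c)
    simp only [biUnion_union]
    omega

section Pattern

open Matroid

variable {X : R → C → Bool}

lemma mem_ZRow_singleton {r : R} {c : C} : c ∈ ZRow X {r} ↔ X r c = false := by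
  simp [ZRow]

lemma isFlat_of_mem_LX {N : Matroid C} (hN : N ∈ RX X) {F : Set C} (hF : F ∈ LX X) :
    N.IsFlat F := by
  obtain ⟨hE, hflat⟩ := hN
  obtain ⟨S, rfl⟩ := hF
  obtain rfl | hS := S.eq_empty_or_nonempty
  · simpa [ZRow, hE] using N.ground_isFlat
  · have := hS.to_subtype
    convert IsFlat.iInter fun r : S ↦ hflat r
    ext
    simp [ZRow]

lemma le_mrk_of_mem_RX [Finite C] {k : ℕ}
    (hk : ∃ f : Fin (k + 1) → Set C, StrictMono f ∧ ∀ i, f i ∈ LX X) {N : Matroid C}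
    (hN : N ∈ RX X) : k ≤ N.mrk := by
  obtain ⟨f, hf, hLX⟩ := hk
  rw [mrk_eq_rk_ground]
  exact le_rk_ground_of_strictMono hf fun i ↦ isFlat_of_mem_LX hN (hLX i)

lemma exists_mem_RX_mrk_le [Finite C] {M : Matroid R} [M.RankFinite] (hM : M ∈ RX fun c r ↦ X r c)
    {M' : Matroid β} [M'.RankFinite] {φ : Set R → Set β} (hφ : M.IsFlatAntiEmbedding M' φ)
    (hr : M'.rk M'.E = M.rk M.E) : ∃ N ∈ RX X, N.mrk ≤ M.mrk := by
  obtain ⟨hME, hMflat⟩ := hM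
  set Φ : C → Set β := fun c ↦ φ (ZRow (fun c r ↦ X r c) {c})
  have hf := M'.isPolymatroidRank_rk_biUnion Φ
  refine ⟨hf.matroid, ⟨hf.matroid_E, fun r ↦ ?_⟩, ?_⟩
  · refine isFlat_of_rk_lt_rk_insert (subset_univ _) fun c' hc' ↦ ?_
    rw [hf.matroid_rk, hf.matroid_rk]
    refine inducedRank_lt_insert hc'.2 fun B hB ↦ ?_
    have hp : r ∈ M.E \ ZRow (fun c r ↦ X r c) {c'} := by
      simpa [hME, mem_ZRow_singleton] using hc'.2
    have hΦ : ∀ c ∈ B, Φ c ⊆ φ (M.closure {r}) := fun c hc ↦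
      hφ.antitone (isFlat_closure _) (hMflat c) ((hMflat c).closure_subset_of_subset
        (singleton_subset_iff.2 (mem_ZRow_singleton.2 (mem_ZRow_singleton.1 (hB hc)))))
    rw [biUnion_insert, union_comm]
    exact rk_lt_rk_union_of_not_subset (hφ.isFlat_image (isFlat_closure _)) (iUnion₂_subset hΦ)
      (hφ.isFlat_image (hMflat c')).subset_ground
      (hφ.not_image_subset_image_closure_singleton hr (hMflat c') hp)
  · rw [mrk_eq_rk_ground, hf.matroid_E, hf.matroid_rk, mrk_eq_rk_ground, ← hr]
    calc inducedRank _ univ ≤ (univ \ univ).ncard + M'.rk (⋃ c ∈ univ, Φ c) :=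
          inducedRank_le subset_rfl
      _ ≤ M'.rk M'.E := by
          simpa using M'.rk_mono (iUnion_subset fun c ↦ (hφ.isFlat_image (hMflat c)).subset_ground)

end Pattern

/-- if `k` is the triangle number of `X` (the height of `L(X)`) and
some matroid of rank `k` in `R(Xᵀ)` has an adjoint, then the matroid minimum rank
of `X` equals `k`. -/
theorem mr_eq_tri_of_adjoint [Fintype R] [Fintype C] (X : R → C → Bool) (k : ℕ)
    (htri : IsGreatest
      {n : ℕ | ∃ f : Fin (n + 1) → Set C, StrictMono f ∧ ∀ i, f i ∈ LX X} k)
    (hadj : ∃ M ∈ RX (fun c r => X r c), M.mrk = k ∧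
      ∃ M' : Matroid (Set R), M.IsAdjoint M') :
    mr X = k := by
  obtain ⟨M, hM, hMk, M', -, -, hrk, φ, hφflat, hφinj, hφanti, -⟩ := hadj
  have hφ : M.IsFlatAntiEmbedding M' φ :=
    ⟨fun F hF ↦ hφflat F hF, hφinj, fun F G hF hG h ↦ hφanti F G hF hG h⟩
  obtain ⟨N, hN, hNM⟩ :=
    exists_mem_RX_mrk_le hM hφ (by simp only [← Matroid.mrk_eq_rk_ground, hrk])
  have hlower : ∀ N ∈ RX X, k ≤ N.mrk := fun N hN ↦ le_mrk_of_mem_RX htri.1 hN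
  refine IsLeast.csInf_eq ⟨⟨N, hN, ?_⟩, ?_⟩
  · exact le_antisymm (hMk ▸ hNM) (hlower N hN)
  · rintro _ ⟨N, hN, rfl⟩
    exact hlower N hN
end
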